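/- Assume that for every n ≥ 3, the weight function w_n on G_n (the graph obtained by attaching a pendant root r to a vertex of Q_{n-1}), defined by w_n(r) = 0 and w_n(v) = 1/d(v,r) for v ≠ r, is valid. Then for every n ≥ 2, π(Q_n) = 2^n. -/

import Mathlib

open SimpleGraph Finset

def PebMove {V : Type*} [DecidableEq V] (G : SimpleGraph V) (p q : V → ℕ) : Prop :=
  ∃ u v, G.Adj u v ∧ 2 ≤ p u ∧
    q = fun x => if x = u then p u - 2 else if x = v then p v + 1 else p x

def Solvable {V : Type*} [DecidableEq V] (G : SimpleGraph V) (r : V) (p : V → ℕ) : Prop :=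
  ∃ q, Relation.ReflTransGen (PebMove G) p q ∧ 1 ≤ q r

noncomputable def confWeight {V : Type*} [Fintype V] (w : V → ℝ) (p : V → ℕ) : ℝ :=
  ∑ v, (p v : ℝ) * w v

def ValidWeight {V : Type*} [Fintype V] [DecidableEq V] (G : SimpleGraph V) (r : V)
    (w : V → ℝ) : Prop :=
  w r = 0 ∧ (∀ v, v ≠ r → 0 < w v) ∧
    ∀ p : V → ℕ, ¬ Solvable G r p → confWeight w p ≤ confWeight w (fun _ => 1)

noncomputable def rootedPebblingNumber {V : Type*} [Fintype V] [DecidableEq V]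
    (G : SimpleGraph V) (r : V) : ℕ :=
  sInf {N | ∀ p : V → ℕ, N ≤ ∑ v, p v → Solvable G r p}

noncomputable def pebblingNumber {V : Type*} [Fintype V] [DecidableEq V]
    (G : SimpleGraph V) : ℕ :=
  sInf {N | ∀ (r : V) (p : V → ℕ), N ≤ ∑ v, p v → Solvable G r p}

def cubeGraph (n : ℕ) : SimpleGraph (Fin n → Bool) :=
  SimpleGraph.fromRel (fun x y => hammingDist x y = 1)

def addPendant {V : Type*} (G : SimpleGraph V) (a : V) : SimpleGraph (Option V) :=
  SimpleGraph.fromRel (fun x y =>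
    match x, y with
    | some u, some v => G.Adj u v
    | none, some u => u = a
    | _, _ => False)

def lollipop (n m : ℕ) : SimpleGraph (Fin (n + 1) ⊕ Fin (m + 1)) :=
  SimpleGraph.fromRel (fun x y =>
    match x, y with
    | Sum.inl i, Sum.inl j => (i : ℕ) + 1 = (j : ℕ)
    | Sum.inl i, Sum.inr j => i = 0 ∧ j ≠ 0
    | Sum.inr i, Sum.inr j => i = 0 ∧ j ≠ 0
    | _, _ => False)

/-!
For `n ≥ 3` and a root `r` of `Q_n`, each direction `i` gives a copy of `G_n` inside `Q_n`: the
root `r` attached to the facet `{v | v i ≠ r i}`. A configuration that cannot reach `r` restricts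
to a configuration of each copy that cannot reach its root, so the validity of `1 / d` bounds its
weight in each copy. A vertex `v ≠ r` lies in `d(v, r)` copies, each time with weight
`1 / d(v, r)`, so the sum of these bounds says that the configuration has at most `2 ^ n - 1`
pebbles. `Q_2` is a square and is handled directly. Conversely, `2 ^ n - 1` pebbles on the antipode
of `r` cannot reach `r`, as the weight `2 ^ (-d(v, r))` never increases under a pebbling move.
-/

section Pebbling

variable {V W : Type*} [DecidableEq V] [DecidableEq W] {G : SimpleGraph V} {H : SimpleGraph W}
  {r u v : V} {p q : V → ℕ}

theorem PebMove.exists_of_hom (f : G →g H) (hf : Function.Injective f) {s : W → ℕ}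
    (hm : PebMove G p q) (hle : ∀ x, p x ≤ s (f x)) :
    ∃ s', PebMove H s s' ∧ ∀ x, q x ≤ s' (f x) := by
  obtain ⟨u, v, huv, hu, rfl⟩ := hm
  refine ⟨_, ⟨f u, f v, f.map_adj huv, hu.trans (hle u), rfl⟩, fun x => ?_⟩
  have := hle x
  simp only [hf.eq_iff]
  split_ifs <;> subst_vars <;> omega

theorem exists_reflTransGen_pebMove_of_hom (f : G →g H) (hf : Function.Injective f)
    {s : W → ℕ} (hpq : Relation.ReflTransGen (PebMove G) p q) (hle : ∀ x, p x ≤ s (f x)) :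
    ∃ s', Relation.ReflTransGen (PebMove H) s s' ∧ ∀ x, q x ≤ s' (f x) := by
  induction hpq with
  | refl => exact ⟨s, .refl, hle⟩
  | tail _ hstep ih =>
    obtain ⟨s', hs', hle'⟩ := ih
    obtain ⟨s'', hs'', hle''⟩ := hstep.exists_of_hom f hf hle'
    exact ⟨s'', hs'.tail hs'', hle''⟩

theorem Solvable.of_hom (f : G →g H) (hf : Function.Injective f) {s : W → ℕ}
    (hsolv : Solvable G r (s ∘ f)) : Solvable H (f r) s := by
  obtain ⟨q, hq, hr⟩ := hsolv
  obtain ⟨s', hs', hle⟩ := exists_reflTransGen_pebMove_of_hom f hf hq fun _ => le_rfl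
  exact ⟨s', hs', hr.trans (hle r)⟩

theorem Solvable.of_pebMove (hm : PebMove G p q) (hsolv : Solvable G r q) : Solvable G r p := by
  obtain ⟨d, hd, hr⟩ := hsolv
  exact ⟨d, hd.head hm, hr⟩

theorem solvable_of_one_le (h : 1 ≤ p r) : Solvable G r p :=
  ⟨p, .refl, h⟩

theorem solvable_of_adj_of_two_le (hur : G.Adj u r) (hu : 2 ≤ p u) : Solvable G r p :=
  Solvable.of_pebMove ⟨u, r, hur, hu, rfl⟩ <| solvable_of_one_le <| by simp [hur.ne']

theorem solvable_of_adj_adj_of_two_le_of_one_le (huv : G.Adj u v) (hvr : G.Adj v r)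
    (hu : 2 ≤ p u) (hv : 1 ≤ p v) : Solvable G r p :=
  Solvable.of_pebMove ⟨u, v, huv, hu, rfl⟩ <| solvable_of_adj_of_two_le hvr <| by
    simp [huv.ne', hv]

theorem solvable_of_adj_adj_of_four_le (huv : G.Adj u v) (hvr : G.Adj v r) (hu : 4 ≤ p u) :
    Solvable G r p :=
  Solvable.of_pebMove ⟨u, v, huv, by omega, rfl⟩ <|
    solvable_of_adj_adj_of_two_le_of_one_le huv hvr (by simp; omega) (by simp [huv.ne'])

theorem solvable_of_square {a b c : V} (har : G.Adj a r) (hbr : G.Adj b r) (hca : G.Adj c a)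
    (hcb : G.Adj c b) (hp : 4 ≤ p r + p a + p b + p c) : Solvable G r p := by
  by_cases hr : 1 ≤ p r
  · exact solvable_of_one_le hr
  by_cases ha : 2 ≤ p a
  · exact solvable_of_adj_of_two_le har ha
  by_cases hb : 2 ≤ p b
  · exact solvable_of_adj_of_two_le hbr hb
  by_cases ha' : 1 ≤ p a
  · exact solvable_of_adj_adj_of_two_le_of_one_le hca har (by omega) ha'
  by_cases hb' : 1 ≤ p b
  · exact solvable_of_adj_adj_of_two_le_of_one_le hcb hbr (by omega) hb'
  exact solvable_of_adj_adj_of_four_le hca har (by omega)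

variable [Fintype V]

theorem confWeight_of_pebMove (w : V → ℝ) (huv : u ≠ v) (hu : 2 ≤ p u)
    (hq : q = fun x => if x = u then p u - 2 else if x = v then p v + 1 else p x) :
    confWeight w q = confWeight w p - 2 * w u + w v := by
  have hpoint : ∀ x, (q x : ℝ) * w x
      = p x * w x - (if x = u then 2 * w u else 0) + (if x = v then w v else 0) := by
    intro x
    subst hq
    dsimp only
    split_ifs <;> subst_vars
    · exact absurd rfl huv
    · push_cast [hu]; ring
    · push_cast; ring
    · ring
  simp only [confWeight, hpoint, Finset.sum_add_distrib, Finset.sum_sub_distrib,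
    Finset.sum_ite_eq', Finset.mem_univ, if_true]

theorem confWeight_pi_single (w : V → ℝ) (k : ℕ) :
    confWeight w (Pi.single u k) = k * w u := by
  simp [confWeight, Pi.single_apply]

theorem confWeight_antitone_of_reflTransGen {w : V → ℝ}
    (hw : ∀ u v, G.Adj u v → w v ≤ 2 * w u) (hpq : Relation.ReflTransGen (PebMove G) p q) :
    confWeight w q ≤ confWeight w p := by
  induction hpq with
  | refl => exact le_rfl
  | tail _ hstep ih =>
    obtain ⟨u, v, huv, hu, hq⟩ := hstep
    rw [confWeight_of_pebMove w huv.ne hu hq]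
    linarith [hw u v huv]

theorem Solvable.le_confWeight {w : V → ℝ} (hw₀ : ∀ v, 0 ≤ w v)
    (hw : ∀ u v, G.Adj u v → w v ≤ 2 * w u) (hsolv : Solvable G r p) :
    w r ≤ confWeight w p := by
  obtain ⟨q, hpq, hr⟩ := hsolv
  calc w r ≤ q r * w r := le_mul_of_one_le_left (hw₀ r) (by exact_mod_cast hr)
    _ ≤ confWeight w q :=
      Finset.single_le_sum (f := fun v => (q v : ℝ) * w v)
        (fun v _ => mul_nonneg (Nat.cast_nonneg _) (hw₀ v)) (Finset.mem_univ r)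
    _ ≤ confWeight w p := confWeight_antitone_of_reflTransGen hw hpq

end Pebbling

section Distance

variable {V : Type*} {G : SimpleGraph V}

theorem SimpleGraph.Walk.le_add_length (φ : V → ℕ) (hφ : ∀ x y, G.Adj x y → φ y ≤ φ x + 1)
    {u v : V} (w : G.Walk u v) : φ v ≤ φ u + w.length := by
  induction w with
  | nil => simp
  | cons h _ ih =>
    rw [Walk.length_cons]
    linarith [hφ _ _ h]

theorem SimpleGraph.dist_eq_length_of_le_potential (φ : V → ℕ)
    (hφ : ∀ x y, G.Adj x y → φ y ≤ φ x + 1) {u v : V} (w : G.Walk u v)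
    (hw : φ u + w.length ≤ φ v) : G.dist u v = w.length := by
  obtain ⟨w', hw'⟩ := SimpleGraph.Reachable.exists_walk_length_eq_dist ⟨w⟩
  have := w'.le_add_length φ hφ
  have := G.dist_le w
  omega

end Distance

section Pendant

variable {V : Type*} (G : SimpleGraph V) (a : V)

@[simp]
theorem addPendant_adj_some_some {u v : V} :
    (addPendant G a).Adj (some u) (some v) ↔ G.Adj u v := by
  simp only [addPendant, fromRel_adj, ne_eq, Option.some.injEq]
  exact ⟨fun ⟨_, h⟩ => h.elim id G.adj_symm, fun h => ⟨h.ne, .inl h⟩⟩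

@[simp]
theorem addPendant_adj_none_some {u : V} : (addPendant G a).Adj none (some u) ↔ u = a := by
  simp [addPendant]

@[simp]
theorem addPendant_adj_some_none {u : V} : (addPendant G a).Adj (some u) none ↔ u = a := by
  simp [addPendant]

def addPendantSome : G →g addPendant G a where
  toFun := some
  map_rel' h := (addPendant_adj_some_some G a).2 h

/-- The weight `1 / d(r, v)`; it vanishes at `v = r` because `1 / 0 = 0`. -/
noncomputable def distWeight {W : Type*} (H : SimpleGraph W) (r : W) : W → ℝ :=
  fun v => 1 / (H.dist r v : ℝ)

end Pendant

section Hamming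

variable {ι β : Type*} [Fintype ι] [DecidableEq ι] [DecidableEq β]

theorem hammingDist_update_of_ne {x : ι → β} {i : ι} {b : β}
    (hb : x i ≠ b) : hammingDist x (Function.update x i b) = 1 := by
  rw [hammingDist, Finset.card_eq_one]
  refine ⟨i, Finset.ext fun j => ?_⟩
  by_cases hj : j = i <;> simp [Function.update_apply, hj, hb]

theorem hammingDist_update_eq_sub_one {x y : ι → β} {i : ι} (hi : x i ≠ y i) :
    hammingDist (Function.update x i (y i)) y = hammingDist x y - 1 := by
  have : ({j | Function.update x i (y i) j ≠ y j} : Finset ι)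
      = ({j | x j ≠ y j} : Finset ι).erase i := by
    ext j
    by_cases hj : j = i <;> simp [Function.update_apply, hj]
  rw [hammingDist, hammingDist, this, Finset.card_erase_of_mem (by simpa using hi)]

theorem hammingDist_insertNth {m : ℕ} (i : Fin (m + 1)) (b c : β) (x y : Fin m → β) :
    hammingDist (i.insertNth b x : Fin (m + 1) → β) (i.insertNth c y)
      = (if b = c then 0 else 1) + hammingDist x y := by
  simp only [hammingDist, Finset.card_filter, Fin.sum_univ_succAbove _ i,
    Fin.insertNth_apply_same, Fin.insertNth_apply_succAbove, ite_not]

end Hamming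

theorem cubeGraph_adj {n : ℕ} {x y : Fin n → Bool} :
    (cubeGraph n).Adj x y ↔ hammingDist x y = 1 := by
  rw [cubeGraph, fromRel_adj, hammingDist_comm y x, or_self]
  exact ⟨And.right, fun h => ⟨fun hxy => by simp [hxy] at h, h⟩⟩

theorem exists_cubeGraph_walk_length_eq_hammingDist {n : ℕ} (x y : Fin n → Bool) :
    ∃ w : (cubeGraph n).Walk x y, w.length = hammingDist x y := by
  induction hd : hammingDist x y generalizing x with
  | zero =>
    obtain rfl := hammingDist_eq_zero.1 hd
    exact ⟨.nil, rfl⟩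
  | succ d ih =>
    obtain ⟨i, hi⟩ := Function.ne_iff.1 (hammingDist_ne_zero.1 (by omega : hammingDist x y ≠ 0))
    have hadj : (cubeGraph n).Adj x (Function.update x i (y i)) :=
      cubeGraph_adj.2 (hammingDist_update_of_ne hi)
    obtain ⟨w, hw⟩ := ih _ (by rw [hammingDist_update_eq_sub_one hi, hd]; rfl)
    exact ⟨.cons hadj w, by simp [hw]⟩

theorem addPendant_cubeGraph_dist {m : ℕ} (a x : Fin m → Bool) :
    (addPendant (cubeGraph m) a).dist none (some x) = hammingDist a x + 1 := by
  obtain ⟨w, hw⟩ := exists_cubeGraph_walk_length_eq_hammingDist a x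
  let φ : Option (Fin m → Bool) → ℕ := fun o => o.elim 0 fun y => hammingDist a y + 1
  have hφ : ∀ o o', (addPendant (cubeGraph m) a).Adj o o' → φ o' ≤ φ o + 1 := by
    rintro (_ | u) (_ | v) h
    · exact absurd h (SimpleGraph.irrefl _)
    · obtain rfl := (addPendant_adj_none_some _ _).1 h
      simp [φ]
    · simp [φ]
    · have := hammingDist_triangle a u v
      rw [addPendant_adj_some_some, cubeGraph_adj] at h
      simp only [φ, Option.elim_some]
      omega
  let w' : (addPendant (cubeGraph m) a).Walk none (some x) :=
    .cons ((addPendant_adj_none_some _ _).2 rfl) (w.map (addPendantSome _ a))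
  have hw' : w'.length = hammingDist a x + 1 := by
    change (w.map (addPendantSome _ a)).length + 1 = _
    rw [Walk.length_map, hw]
  rw [dist_eq_length_of_le_potential φ hφ w' (by simp [hw', φ]), hw']

theorem hammingDist_insertNth_not_self {m : ℕ} (r : Fin (m + 1) → Bool) (i : Fin (m + 1))
    (x : Fin m → Bool) :
    hammingDist (i.insertNth (!r i) x) r = hammingDist (i.removeNth r) x + 1 := by
  conv_lhs => rw [← Fin.insertNth_self_removeNth i r]
  rw [hammingDist_insertNth, hammingDist_comm]
  simp [add_comm]

/-- The copy of `G_{m+1}` inside `Q_{m+1}` rooted at `r` spanned by `r` and the facet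
`{v | v i ≠ r i}`; its pendant edge is the edge of direction `i` at `r`. -/
def cubeCopy {m : ℕ} (r : Fin (m + 1) → Bool) (i : Fin (m + 1)) :
    addPendant (cubeGraph m) (i.removeNth r) →g cubeGraph (m + 1) where
  toFun o := o.elim r (i.insertNth (α := fun _ => Bool) (!r i))
  map_rel' := by
    have hroot : (cubeGraph (m + 1)).Adj r (i.insertNth (!r i) (i.removeNth r)) := by
      rw [Fin.insertNth_removeNth, cubeGraph_adj]
      exact hammingDist_update_of_ne (by simp)
    rintro (_ | u) (_ | v) h
    · exact absurd h (SimpleGraph.irrefl _)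
    · obtain rfl := (addPendant_adj_none_some _ _).1 h
      exact hroot
    · obtain rfl := (addPendant_adj_some_none _ _).1 h
      exact hroot.symm
    · rw [addPendant_adj_some_some, cubeGraph_adj] at h
      simp [cubeGraph_adj, hammingDist_insertNth, h]

theorem cubeCopy_injective {m : ℕ} (r : Fin (m + 1) → Bool) (i : Fin (m + 1)) :
    Function.Injective (cubeCopy r i) := by
  rintro (_ | x) (_ | y) h
  · rfl
  · simpa [cubeCopy] using congrFun h i
  · simpa [cubeCopy] using congrFun h i
  · simpa [cubeCopy] using h

theorem confWeight_comp_cubeCopy {m : ℕ} (r : Fin (m + 1) → Bool) (i : Fin (m + 1))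
    (c : (Fin (m + 1) → Bool) → ℕ) :
    confWeight (distWeight (addPendant (cubeGraph m) (i.removeNth r)) none) (c ∘ cubeCopy r i)
      = ∑ v, if v i ≠ r i then (c v : ℝ) / hammingDist v r else 0 := by
  rw [← (Fin.insertNthEquiv (fun _ => Bool) i).sum_comp, Fintype.sum_prod_type_right,
    confWeight, Fintype.sum_option]
  simp only [distWeight, dist_self, CharP.cast_eq_zero, div_zero, mul_zero, zero_add,
    addPendant_cubeGraph_dist]
  refine Finset.sum_congr rfl fun x _ => ?_
  simp only [Fin.insertNthEquiv_apply, Fin.insertNth_apply_same, ne_eq, ← Bool.eq_not,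
    Finset.sum_ite_eq', Finset.mem_univ, if_true, mul_one_div]
  rw [show Fin.insertNthEquiv (fun _ => Bool) i (!r i, x) = i.insertNth (!r i) x from rfl,
    hammingDist_insertNth_not_self]
  rfl

/-- Each `v ≠ r` lies in exactly `d(v, r)` of the copies, each giving it weight `1 / d(v, r)`. -/
theorem sum_confWeight_comp_cubeCopy {m : ℕ} (r : Fin (m + 1) → Bool)
    (c : (Fin (m + 1) → Bool) → ℕ) :
    ∑ i, confWeight (distWeight (addPendant (cubeGraph m) (i.removeNth r)) none)
      (c ∘ cubeCopy r i) = ∑ v, (c v : ℝ) - c r := by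
  have hv : ∀ v : Fin (m + 1) → Bool, (∑ i, if v i ≠ r i then (c v : ℝ) / hammingDist v r else 0)
      = c v - if v = r then (c v : ℝ) else 0 := by
    intro v
    rw [Finset.sum_ite, Finset.sum_const_zero, add_zero, Finset.sum_const, nsmul_eq_mul]
    change (hammingDist v r : ℝ) * _ = _
    split_ifs with hvr
    · simp [hvr]
    · rw [mul_div_cancel₀ _ (by exact_mod_cast hammingDist_ne_zero.2 hvr), sub_zero]
  simp only [confWeight_comp_cubeCopy]
  rw [Finset.sum_comm]
  simp only [hv, Finset.sum_sub_distrib, Finset.sum_ite_eq', Finset.mem_univ, if_true]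

theorem cubeGraph_solvable_of_validWeight {m : ℕ}
    (hvalid : ∀ a : Fin m → Bool, ValidWeight (addPendant (cubeGraph m) a) none
      (distWeight (addPendant (cubeGraph m) a) none))
    (r : Fin (m + 1) → Bool) (p : (Fin (m + 1) → Bool) → ℕ) (hp : 2 ^ (m + 1) ≤ ∑ v, p v) :
    Solvable (cubeGraph (m + 1)) r p := by
  by_contra hns
  have hpr : p r = 0 := by
    by_contra h
    exact hns (solvable_of_one_le (Nat.one_le_iff_ne_zero.2 h))
  have hcopy : ∀ i, confWeight (distWeight (addPendant (cubeGraph m) (i.removeNth r)) none)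
      (p ∘ cubeCopy r i) ≤ confWeight (distWeight (addPendant (cubeGraph m) (i.removeNth r)) none)
      ((fun _ => 1) ∘ cubeCopy r i) :=
    fun i => (hvalid _).2.2 _ fun hs => hns (hs.of_hom _ (cubeCopy_injective r i))
  have hsum := Finset.sum_le_sum fun i (_ : i ∈ Finset.univ) => hcopy i
  rw [sum_confWeight_comp_cubeCopy, sum_confWeight_comp_cubeCopy] at hsum
  have hle : ∑ v, (p v : ℝ) ≤ 2 ^ (m + 1) - 1 := by simpa [hpr] using hsum
  have hp' : (2 : ℝ) ^ (m + 1) ≤ ∑ v, (p v : ℝ) := by exact_mod_cast hp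
  linarith

theorem cubeGraph_two_solvable (r : Fin 2 → Bool) (p : (Fin 2 → Bool) → ℕ)
    (hp : 4 ≤ ∑ v, p v) : Solvable (cubeGraph 2) r p := by
  let square : Fin 4 → Fin 2 → Bool :=
    ![r, Function.update r 0 (!r 0), Function.update r 1 (!r 1), fun i => !r i]
  have hcover : Finset.univ ⊆ Finset.univ.image square := by
    revert r; decide
  have hsum : ∑ v, p v ≤ p r + p (square 1) + p (square 2) + p (square 3) :=
    ((Finset.sum_le_sum_of_subset hcover).trans
      (Finset.sum_image_le_of_nonneg fun _ _ => Nat.zero_le _)).trans_eq (Fin.sum_univ_four _)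
  refine solvable_of_square (a := square 1) (b := square 2) (c := square 3) ?_ ?_ ?_ ?_ (by omega)
  all_goals clear hsum hcover hp; rw [cubeGraph_adj]; revert r; decide

/-- Under the weight `2^{-d(v, r)}` a solvable configuration has weight at least `1`, while
`2^n - 1` pebbles on the antipode of `r` weigh `1 - 2^{-n}`. -/
theorem two_pow_le_of_forall_solvable_cubeGraph {n N : ℕ}
    (hN : ∀ r p, N ≤ ∑ v, p v → Solvable (cubeGraph n) r p) : 2 ^ n ≤ N := by
  by_contra! hlt
  let r : Fin n → Bool := fun _ => false
  let w : (Fin n → Bool) → ℝ := fun v => (1 / 2) ^ hammingDist v r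
  have hw : ∀ u v, (cubeGraph n).Adj u v → w v ≤ 2 * w u := by
    intro u v huv
    have : hammingDist u r ≤ hammingDist v r + 1 := by
      have := hammingDist_triangle u v r
      rw [cubeGraph_adj.1 huv] at this
      omega
    calc w v = 2 * (1 / 2) ^ (hammingDist v r + 1) := by simp only [w]; ring
      _ ≤ 2 * w u := by gcongr; exact pow_le_pow_of_le_one (by norm_num) (by norm_num) this
  have hs := hN r (Pi.single (fun _ => true) (2 ^ n - 1)) (by simp; omega)
  have hweight := hs.le_confWeight (fun v => by positivity) hw
  have hantipode : hammingDist (fun _ => true : Fin n → Bool) r = n := by simp [hammingDist, r]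
  rw [confWeight_pi_single] at hweight
  simp only [w, hammingDist_self, pow_zero, hantipode, one_div, inv_pow, ← div_eq_mul_inv] at hweight
  rw [le_div_iff₀ (by positivity), Nat.cast_sub Nat.one_le_two_pow] at hweight
  push_cast at hweight
  linarith

theorem stmt15
    (h : ∀ m : ℕ, 2 ≤ m → ∀ a : Fin m → Bool,
      ValidWeight (addPendant (cubeGraph m) a) none
        (fun v => 1 / ((addPendant (cubeGraph m) a).dist none v : ℝ))) :
    ∀ n : ℕ, 2 ≤ n → pebblingNumber (cubeGraph n) = 2 ^ n := by
  intro n hn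
  have hsolv : ∀ r p, 2 ^ n ≤ ∑ v, p v → Solvable (cubeGraph n) r p := by
    obtain rfl | ⟨m, hm, rfl⟩ : n = 2 ∨ ∃ m, 2 ≤ m ∧ n = m + 1 :=
      (eq_or_lt_of_le hn).imp Eq.symm fun hlt => ⟨n - 1, by omega, by omega⟩
    · exact cubeGraph_two_solvable
    · exact cubeGraph_solvable_of_validWeight (h m hm)
  exact IsLeast.csInf_eq ⟨hsolv, fun N hN => two_pow_le_of_forall_solvable_cubeGraph hN⟩
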